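/- Let S be a semigroup that is the disjoint union of free monogenic subsemigroups ⟨a⟩, ⟨b⟩, ⟨c⟩, and suppose ab = b², ba = a², ac = c^i, ca = b^j, bc = c^k, cb = a^l for positive integers i, j, k, l. Then i = j = k = l = 2. -/

import Mathlib

/-- `pw a n` is `a ^ n` for `n ≥ 1` (with junk value `a` at `n = 0`),
defined in any magma. -/
def pw {S : Type*} [Mul S] (a : S) : ℕ → S
  | 0 => a
  | 1 => a
  | n + 2 => pw a (n + 1) * a

/-- The monogenic subsemigroup `⟨a⟩ = {a^n : n ≥ 1}`. -/
def genSet {S : Type*} [Mul S] (a : S) : Set S := {x | ∃ n, 1 ≤ n ∧ pw a n = x}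

/-- `a` has infinite order: its positive powers are pairwise distinct,
i.e. `⟨a⟩` is free monogenic. -/
def InfOrder {S : Type*} [Mul S] (a : S) : Prop :=
  ∀ m n : ℕ, 1 ≤ m → 1 ≤ n → pw a m = pw a n → m = n

/-!
Associativity is tested on the triples `(a, b, c)`, `(c, b, c)` and `(c, b, a)`. Rewriting both
bracketings with the defining relations turns each test into an equality of two powers of a single
generator, so freeness yields `i = k`, `k = il - l` and `j = l`. Hence `k = (k - 1) l`, which for
positive integers forces `k = l = 2`.
-/

section Powers

variable {S : Type*}

@[simp]
lemma pw_one [Mul S] (a : S) : pw a 1 = a := rfl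

lemma pw_succ [Mul S] (a : S) {n : ℕ} (hn : 1 ≤ n) : pw a (n + 1) = pw a n * a := by
  obtain ⟨m, rfl⟩ := Nat.exists_eq_add_of_le' hn
  rfl

variable [Semigroup S] {x y c : S} {t : ℕ}

lemma mul_pw_of_mul_eq (h : x * c = pw c (t + 1)) {n : ℕ} (hn : 1 ≤ n) :
    x * pw c n = pw c (t + n) := by
  induction n, hn using Nat.le_induction with
  | base => simpa using h
  | succ n hn ih => rw [pw_succ c hn, ← mul_assoc, ih, ← pw_succ c (by omega), add_assoc]

lemma pw_mul_of_mul_eq (h : y * c = pw c (t + 1)) {m : ℕ} (hm : 1 ≤ m) :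
    pw y m * c = pw c (m * t + 1) := by
  induction m, hm using Nat.le_induction with
  | base => simpa using h
  | succ m hm ih =>
    rw [pw_succ y hm, mul_assoc, h, mul_pw_of_mul_eq ih (by omega)]
    congr 1
    ring

end Powers

theorem stmt_16_general {S : Type*} [Semigroup S] (a b c : S)
    (ha : InfOrder a) (hc : InfOrder c)
    (i j k l : ℕ) (hi : 1 ≤ i) (hj : 1 ≤ j) (hk : 1 ≤ k) (hl : 1 ≤ l)
    (h1 : a * b = pw b 2) (h2 : b * a = pw a 2)
    (h3 : a * c = pw c i) (h4 : c * a = pw b j)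
    (h5 : b * c = pw c k) (h6 : c * b = pw a l) :
    i = 2 ∧ j = 2 ∧ k = 2 ∧ l = 2 := by
  -- From here on `i`, `k`, `l` denote the exponents of the statement minus one.
  obtain ⟨i, rfl⟩ := Nat.exists_eq_add_of_le' hi
  obtain ⟨k, rfl⟩ := Nat.exists_eq_add_of_le' hk
  obtain ⟨l, rfl⟩ := Nat.exists_eq_add_of_le' hl
  have habc : 2 * k + 1 = i + (k + 1) := hc _ _ (by omega) (by omega) <| calc
    pw c (2 * k + 1) = (a * b) * c := by rw [h1, pw_mul_of_mul_eq h5 (m := 2) (by norm_num)]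
    _ = a * (b * c) := mul_assoc a b c
    _ = pw c (i + (k + 1)) := by rw [h5, mul_pw_of_mul_eq h3 hk]
  have hcbc : (l + 1) * i + 1 = 1 + (k + 1) := hc _ _ (by omega) (by omega) <| calc
    pw c ((l + 1) * i + 1) = (c * b) * c := by rw [h6, pw_mul_of_mul_eq h3 hl]
    _ = c * (b * c) := mul_assoc c b c
    _ = pw c (1 + (k + 1)) := by rw [h5, mul_pw_of_mul_eq (x := c) (t := 1) rfl hk]
  have hcba : l + 1 + 1 = j * 1 + 1 := ha _ _ (by omega) (by omega) <| calc
    pw a (l + 1 + 1) = (c * b) * a := by rw [h6, pw_succ a hl]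
    _ = (c * a) * a := by rw [mul_assoc, h2, mul_assoc]; rfl
    _ = pw a (j * 1 + 1) := by rw [h4, pw_mul_of_mul_eq h2 hj]
  have hli : l * i = 1 := by nlinarith
  obtain ⟨rfl, rfl⟩ : l = 1 ∧ i = 1 := mul_eq_one.mp hli
  omega

theorem stmt_16 {S : Type*} [Semigroup S] (a b c : S)
    (ha : InfOrder a) (hb : InfOrder b) (hc : InfOrder c)
    (hab : genSet a ∩ genSet b = ∅) (hac : genSet a ∩ genSet c = ∅)
    (hbc : genSet b ∩ genSet c = ∅)
    (hcover : genSet a ∪ genSet b ∪ genSet c = Set.univ)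
    (i j k l : ℕ) (hi : 1 ≤ i) (hj : 1 ≤ j) (hk : 1 ≤ k) (hl : 1 ≤ l)
    (h1 : a * b = pw b 2) (h2 : b * a = pw a 2)
    (h3 : a * c = pw c i) (h4 : c * a = pw b j)
    (h5 : b * c = pw c k) (h6 : c * b = pw a l) :
    i = 2 ∧ j = 2 ∧ k = 2 ∧ l = 2 :=
  stmt_16_general a b c ha hc i j k l hi hj hk hl h1 h2 h3 h4 h5 h6
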